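/- arXiv:1506.05909 — 2 statements merged into one kernel-verified Lean document; each statement's English description precedes it below -/
import Mathlib

section
/- Let Q : [0,T] → Matrix(n,n,ℝ) be continuous with nonnegative off-diagonal entries and rows summing to zero, and let P : [0,T] → ℝ^n be differentiable with P'(t) = Q(t)ᵀ P(t) and P(0) componentwise nonnegative. Then P(t) is componentwise nonnegative for all t ∈ [0,T]. -/
open Set Matrix Filter Topology

set_option maxHeartbeats 1000000 in
theorem ictmc_nonneg_preservation
    (n : ℕ) (T : ℝ) (hT : 0 ≤ T)
    (Q : ℝ → Matrix (Fin n) (Fin n) ℝ)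
    (hQcont : ∀ i j, ContinuousOn (fun t => Q t i j) (Icc 0 T))
    (hQoffdiag : ∀ t ∈ Icc (0 : ℝ) T, ∀ i j, i ≠ j → 0 ≤ Q t i j)
    (hQrow : ∀ t ∈ Icc (0 : ℝ) T, ∀ i, ∑ j, Q t i j = 0)
    (P : ℝ → Fin n → ℝ)
    (hP : ∀ t ∈ Icc (0 : ℝ) T, HasDerivWithinAt P (Matrix.mulVec (Q t)ᵀ (P t)) (Icc 0 T) t)
    (hP0 : ∀ j, 0 ≤ P 0 j) :
    ∀ t ∈ Icc (0 : ℝ) T, ∀ j, 0 ≤ P t j := by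
  -- entrywise bound on Q
  have hb : ∀ i j : Fin n, ∃ Cij : ℝ, ∀ t ∈ Icc (0:ℝ) T, |Q t i j| ≤ Cij := by
    intro i j
    obtain ⟨Cij, hCij⟩ := isCompact_Icc.exists_bound_of_continuousOn (hQcont i j)
    exact ⟨Cij, fun t ht => by simpa [Real.norm_eq_abs] using hCij t ht⟩
  choose c hc using hb
  set C : ℝ := ∑ p : Fin n × Fin n, |c p.1 p.2| with hCdef
  have hC0 : 0 ≤ C := Finset.sum_nonneg fun p _ => abs_nonneg _
  have hC : ∀ t ∈ Icc (0:ℝ) T, ∀ i j, |Q t i j| ≤ C := by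
    intro t ht i j
    refine (hc i j t ht).trans ((le_abs_self _).trans ?_)
    exact Finset.single_le_sum (f := fun p : Fin n × Fin n => |c p.1 p.2|)
      (fun p _ => abs_nonneg _) (Finset.mem_univ (i, j))
  set K : ℝ := n * C + 1 with hKdef
  -- P components are continuous on [0,T]
  have hPcont : ∀ j, ContinuousOn (fun t => P t j) (Icc 0 T) := by
    intro j t ht
    exact (continuous_apply j).continuousAt.comp_continuousWithinAt
      (hP t ht).continuousWithinAt
  -- main claim: for every ε > 0, P t j + ε exp(K t) > 0 on [0,T]
  have main : ∀ ε : ℝ, 0 < ε → ∀ t ∈ Icc (0:ℝ) T, ∀ j, 0 < P t j + ε * Real.exp (K * t) := by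
    intro ε hε
    by_contra hbad
    push_neg at hbad
    obtain ⟨t1, ht1, j1, hj1⟩ := hbad
    set g : Fin n → ℝ → ℝ := fun j t => P t j + ε * Real.exp (K * t) with hg
    have hgc : ∀ j, ContinuousOn (g j) (Icc 0 T) :=
      fun j => (hPcont j).add ((Real.continuous_exp.comp (continuous_const.mul continuous_id)).continuousOn.const_smul ε)
    set B : Set ℝ := {t | t ∈ Icc (0:ℝ) T ∧ ∃ j, g j t ≤ 0} with hB
    have hBclosed : IsClosed B := by
      have : B = ⋃ j : Fin n, (Icc (0:ℝ) T ∩ (g j) ⁻¹' Iic 0) := by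
        ext t
        simp only [hB, mem_setOf_eq, mem_iUnion, mem_inter_iff, mem_preimage, mem_Iic]
        tauto
      rw [this]
      exact isClosed_iUnion_of_finite fun j =>
        (hgc j).preimage_isClosed_of_isClosed isClosed_Icc isClosed_Iic
    have hBne : B.Nonempty := ⟨t1, ht1, j1, hj1⟩
    have hBbdd : BddBelow B := ⟨0, fun t ht => ht.1.1⟩
    set t0 : ℝ := sInf B with ht0def
    have ht0B : t0 ∈ B := hBclosed.csInf_mem hBne hBbdd
    have ht0Icc : t0 ∈ Icc (0:ℝ) T := ht0B.1
    have ht0pos : 0 < t0 := by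
      rcases lt_or_eq_of_le ht0Icc.1 with h | h
      · exact h
      · exfalso
        obtain ⟨j, hj⟩ := ht0B.2
        rw [← h] at hj
        have : 0 < g j 0 := by
          have := hP0 j
          simp only [hg]
          positivity
        linarith
    have hpos : ∀ t ∈ Ico (0:ℝ) t0, ∀ j, 0 < g j t := by
      intro t ht j
      by_contra hle
      push_neg at hle
      have htB : t ∈ B := ⟨⟨ht.1, le_trans ht.2.le ht0Icc.2⟩, j, hle⟩
      exact absurd (csInf_le hBbdd htB) (not_le.mpr ht.2)
    have hsub : Ico (0:ℝ) t0 ⊆ Icc 0 T := fun t ht => ⟨ht.1, le_trans ht.2.le ht0Icc.2⟩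
    have hne : (𝓝[Ico (0:ℝ) t0] t0).NeBot := by
      rw [← mem_closure_iff_nhdsWithin_neBot, closure_Ico ht0pos.ne]
      exact ⟨ht0pos.le, le_refl _⟩
    have hge : ∀ i, 0 ≤ g i t0 := by
      intro i
      have hct : ContinuousWithinAt (g i) (Ico 0 t0) t0 :=
        ((hgc i) t0 ht0Icc).mono hsub
      exact ge_of_tendsto hct (eventually_nhdsWithin_of_forall fun t ht => (hpos t ht i).le)
    obtain ⟨j0, hj0⟩ := ht0B.2
    have hj0eq : g j0 t0 = 0 := le_antisymm hj0 (hge j0)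
    -- derivative of g j0 at t0
    set e : ℝ := Real.exp (K * t0) with hedef
    have hepos : 0 < e := Real.exp_pos _
    set d : ℝ := (Matrix.mulVec (Q t0)ᵀ (P t0)) j0 + ε * (K * e) with hddef
    have hderiv : HasDerivWithinAt (g j0) d (Icc 0 T) t0 := by
      have h1 : HasDerivWithinAt (fun t => P t j0)
          ((Matrix.mulVec (Q t0)ᵀ (P t0)) j0) (Icc 0 T) t0 :=
        (ContinuousLinearMap.proj j0 : (Fin n → ℝ) →L[ℝ] ℝ).hasFDerivAt.comp_hasDerivWithinAt
          t0 (hP t0 ht0Icc)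
      have h2 : HasDerivAt (fun t => ε * Real.exp (K * t)) (ε * (K * e)) t0 := by
        have hKt : HasDerivAt (fun t : ℝ => K * t) K t0 := by
          simpa using (hasDerivAt_id t0).const_mul K
        have h3 : HasDerivAt (fun t => Real.exp (K * t)) (Real.exp (K * t0) * K) t0 :=
          (Real.hasDerivAt_exp (K * t0)).comp t0 hKt
        have h4 := h3.const_mul ε
        have h5 : ε * (K * e) = ε * (Real.exp (K * t0) * K) := by rw [hedef]; ring
        rw [h5]; exact h4
      exact h1.add h2.hasDerivWithinAt
    -- d is positive
    have hd : 0 < d := by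
      have hmv : (Matrix.mulVec (Q t0)ᵀ (P t0)) j0
          = (∑ i, Q t0 i j0 * g i t0) - (∑ i, Q t0 i j0) * (ε * e) := by
        have hPg : ∀ i, P t0 i = g i t0 - ε * e := fun i => by simp [hg, hedef]
        simp only [Matrix.mulVec, dotProduct, Matrix.transpose_apply]
        calc ∑ x : Fin n, Q t0 x j0 * P t0 x
            = ∑ i : Fin n, (Q t0 i j0 * g i t0 - Q t0 i j0 * (ε * e)) := by
              refine Finset.sum_congr rfl fun i _ => ?_
              rw [hPg i]; ring
          _ = (∑ i, Q t0 i j0 * g i t0) - (∑ i, Q t0 i j0) * (ε * e) := by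
              rw [Finset.sum_sub_distrib, ← Finset.sum_mul]
      have hS1 : 0 ≤ ∑ i, Q t0 i j0 * g i t0 := by
        apply Finset.sum_nonneg
        intro i _
        rcases eq_or_ne i j0 with h | h
        · rw [h, hj0eq]; simp
        · exact mul_nonneg (hQoffdiag t0 ht0Icc i j0 h) (hge i)
      have hS2 : (∑ i, Q t0 i j0) ≤ n * C := by
        calc (∑ i, Q t0 i j0) ≤ ∑ i : Fin n, C :=
              Finset.sum_le_sum fun i _ => (le_abs_self _).trans (hC t0 ht0Icc i j0)
          _ = n * C := by simp [Finset.sum_const, mul_comm]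
      have hεe : 0 < ε * e := mul_pos hε hepos
      have : (∑ i, Q t0 i j0) * (ε * e) ≤ (n * C) * (ε * e) :=
        mul_le_mul_of_nonneg_right hS2 hεe.le
      rw [hddef, hmv, hKdef]
      nlinarith
    -- contradiction via slope
    have hderiv' : HasDerivWithinAt (g j0) d (Ico 0 t0) t0 := hderiv.mono hsub
    have hslope := hasDerivWithinAt_iff_tendsto_slope.mp hderiv'
    have hdiff : Ico (0:ℝ) t0 \ {t0} = Ico 0 t0 := by
      apply diff_singleton_eq_self
      simp
    rw [hdiff] at hslope
    have hev : ∀ᶠ t in 𝓝[Ico (0:ℝ) t0] t0, 0 < slope (g j0) t0 t :=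
      hslope.eventually (eventually_gt_nhds hd)
    obtain ⟨t, hst, htmem⟩ := (hev.and (eventually_mem_nhdsWithin)).exists
    have htlt : t < t0 := htmem.2
    have : g j0 t < 0 := by
      have hsl : slope (g j0) t0 t = (g j0 t - g j0 t0) / (t - t0) :=
        slope_def_field (g j0) t0 t
      rw [hsl, hj0eq, sub_zero] at hst
      have hden : t - t0 < 0 := by linarith
      rcases div_pos_iff.mp hst with ⟨h1, h2⟩ | ⟨h1, h2⟩
      · linarith
      · exact h1
    exact absurd (hpos t htmem j0) (not_lt.mpr this.le)
  -- conclude by letting ε → 0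
  intro t ht j
  by_contra h
  push_neg at h
  have hεpos : 0 < -P t j / Real.exp (K * t) :=
    div_pos (by linarith) (Real.exp_pos _)
  have := main _ hεpos t ht j
  rw [div_mul_cancel₀] at this
  · linarith
  · exact (Real.exp_pos _).ne'
end

section
/- Let G : [0,T] → Matrix(n,n,ℝ) be continuous with nonnegative off-diagonal entries and rows summing to zero, and let Y solve Y'(t) = Y(t)·G(t), Y(0) = I. Then all entries of Y(t) are nonnegative for all t ∈ [0,T], and hence Y(t) is a row-stochastic matrix. -/
/-!
Each row `x` of `Y` solves `x' = x G`. Its sum is constant because the rows of `G` sum to zero.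
For nonnegativity, perturb `x` by `ε e^{(C+1)t}` in every entry, where `C` bounds the column sums
of `G`. Wherever the perturbed vector is nonnegative with some entry equal to zero, the
off-diagonal entries of `G` only push that entry up and the exponential outgrows the column sums,
so its derivative there is positive: no entry can cross zero. Letting `ε → 0` gives `x ≥ 0`.
-/

open Set Filter Topology Matrix

theorem nonneg_of_hasDerivWithinAt_pos_of_eq_zero {ι : Type*} [Finite ι] {a b : ℝ}
    {u u' : ℝ → ι → ℝ}
    (hu : ∀ t ∈ Icc a b, ∀ i, HasDerivWithinAt (fun s => u s i) (u' t i) (Icc a b) t)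
    (ha : 0 ≤ u a) (hbdry : ∀ t ∈ Ico a b, 0 ≤ u t → ∀ i, u t i = 0 → 0 < u' t i) :
    ∀ t ∈ Icc a b, 0 ≤ u t := by
  have hcont : ∀ i, ContinuousOn (fun s => u s i) (Icc a b) :=
    fun i t ht => (hu t ht i).continuousWithinAt
  have hclosed : IsClosed ({t | 0 ≤ u t} ∩ Icc a b) := by
    rw [inter_comm]
    exact isClosed_Icc.isClosed_le continuousOn_const (continuousOn_pi.2 hcont)
  refine hclosed.Icc_subset_of_forall_mem_nhdsWithin ha fun x ⟨hx, hxab⟩ => ?_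
  have hIcc : Icc a b ∈ 𝓝[>] x := Icc_mem_nhdsGT_of_mem hxab
  suffices ∀ i, ∀ᶠ t in 𝓝[>] x, 0 ≤ u t i from (eventually_all.2 this).mono fun _ => id
  intro i
  rcases (hx i).lt_or_eq with hpos | hzero
  · exact nhdsWithin_le_of_mem hIcc <|
      ((hcont i x (Ico_subset_Icc_self hxab)).eventually (lt_mem_nhds hpos)).mono fun _ => le_of_lt
  · have hslope := (hasDerivWithinAt_iff_tendsto_slope' (lt_irrefl x)).1
      ((hu x (Ico_subset_Icc_self hxab) i).mono_of_mem_nhdsWithin hIcc)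
    filter_upwards [hslope.eventually (lt_mem_nhds (hbdry x hxab hx i hzero.symm)),
      self_mem_nhdsWithin] with t ht hxt
    exact (hzero.trans_lt ((slope_pos_iff hxt).1 ht)).le

theorem Matrix.vecMul_apply_nonneg_of_apply_eq_zero {ι R : Type*} [Fintype ι] [Semiring R]
    [PartialOrder R] [IsOrderedRing R] {M : Matrix ι ι R} (hM : ∀ k j, k ≠ j → 0 ≤ M k j)
    {v : ι → R} (hv : 0 ≤ v) {j : ι} (hvj : v j = 0) :
    0 ≤ (v ᵥ* M) j :=
  Finset.sum_nonneg fun k _ => by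
    rcases eq_or_ne k j with rfl | hkj
    · simp [hvj]
    · exact mul_nonneg (hv k) (hM k j hkj)

theorem Matrix.sum_vecMul_eq_zero {ι R : Type*} [Fintype ι] [Semiring R] {M : Matrix ι ι R}
    (hM : ∀ k, ∑ j, M k j = 0) (v : ι → R) : ∑ j, (v ᵥ* M) j = 0 := by
  have : M *ᵥ 1 = 0 := funext fun k => by simpa [mulVec, dotProduct] using hM k
  rw [← dotProduct_one, ← dotProduct_mulVec, this, dotProduct_zero]

theorem nonneg_of_hasDerivWithinAt_vecMul_of_sum_le {ι : Type*} [Fintype ι] {a b C : ℝ}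
    {M : ℝ → Matrix ι ι ℝ} {x : ℝ → ι → ℝ} (hM : ∀ t ∈ Icc a b, ∀ k j, k ≠ j → 0 ≤ M t k j)
    (hC : ∀ t ∈ Icc a b, ∀ j, ∑ k, M t k j ≤ C)
    (hx : ∀ t ∈ Icc a b, ∀ j, HasDerivWithinAt (fun s => x s j) ((x t ᵥ* M t) j) (Icc a b) t)
    (hxa : 0 ≤ x a) : ∀ t ∈ Icc a b, 0 ≤ x t := by
  set A := C + 1
  have hbarrier : ∀ ε > 0, ∀ t ∈ Icc a b, 0 ≤ fun j => x t j + ε * Real.exp (A * t) := by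
    intro ε hε
    refine nonneg_of_hasDerivWithinAt_pos_of_eq_zero
      (u' := fun t j => (x t ᵥ* M t) j + ε * (Real.exp (A * t) * A))
      (fun t ht j => (hx t ht j).add ?_) (fun j => add_nonneg (hxa j) (by positivity)) ?_
    · simpa using (((hasDerivAt_id t).const_mul A).exp.const_mul ε).hasDerivWithinAt
    rintro t ht hu j huj
    set e := ε * Real.exp (A * t)
    have hsplit : (x t ᵥ* M t) j = ((fun k => x t k + e) ᵥ* M t) j - e * ∑ k, M t k j := by
      simp only [vecMul, dotProduct, add_mul, Finset.sum_add_distrib, Finset.mul_sum]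
      ring
    have he : 0 < e := by positivity
    have hmetzler := vecMul_apply_nonneg_of_apply_eq_zero (hM t (Ico_subset_Icc_self ht)) hu huj
    have hcol := mul_le_mul_of_nonneg_left (hC t (Ico_subset_Icc_self ht) j) he.le
    linarith
  intro t ht j
  refine le_of_forall_pos_le_add fun δ hδ => ?_
  have := hbarrier (δ / Real.exp (A * t)) (by positivity) t ht j
  rwa [div_mul_cancel₀ _ (Real.exp_pos _).ne'] at this

theorem nonneg_of_hasDerivWithinAt_vecMul {ι : Type*} [Fintype ι] {a b : ℝ}
    {M : ℝ → Matrix ι ι ℝ} {x : ℝ → ι → ℝ}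
    (hMcont : ∀ k j, ContinuousOn (fun t => M t k j) (Icc a b))
    (hM : ∀ t ∈ Icc a b, ∀ k j, k ≠ j → 0 ≤ M t k j)
    (hx : ∀ t ∈ Icc a b, ∀ j, HasDerivWithinAt (fun s => x s j) ((x t ᵥ* M t) j) (Icc a b) t)
    (hxa : 0 ≤ x a) : ∀ t ∈ Icc a b, 0 ≤ x t := by
  obtain ⟨C, hC⟩ := isCompact_Icc.exists_bound_of_continuousOn (f := fun t j => ∑ k, M t k j)
    (continuousOn_pi.2 fun j => continuousOn_finsetSum _ fun k _ => hMcont k j)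
  exact nonneg_of_hasDerivWithinAt_vecMul_of_sum_le hM
    (fun t ht j => (Real.le_norm_self _).trans ((norm_le_pi_norm _ j).trans (hC t ht))) hx hxa

theorem sum_eq_of_hasDerivWithinAt_vecMul {ι : Type*} [Fintype ι] {a b : ℝ}
    {M : ℝ → Matrix ι ι ℝ} {x : ℝ → ι → ℝ} (hM : ∀ t ∈ Icc a b, ∀ k, ∑ j, M t k j = 0)
    (hx : ∀ t ∈ Icc a b, ∀ j, HasDerivWithinAt (fun s => x s j) ((x t ᵥ* M t) j) (Icc a b) t) :
    ∀ t ∈ Icc a b, ∑ j, x t j = ∑ j, x a j := by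
  refine constant_of_has_deriv_right_zero
    (continuousOn_finsetSum _ fun j _ t ht => (hx t ht j).continuousWithinAt) fun t ht => ?_
  have hsum := HasDerivWithinAt.fun_sum (u := Finset.univ) fun j _ =>
    hx t (Ico_subset_Icc_self ht) j
  rw [sum_vecMul_eq_zero (hM t (Ico_subset_Icc_self ht))] at hsum
  exact hsum.mono_of_mem_nhdsWithin (Icc_mem_nhdsGE_of_mem ht)

theorem transition_matrix_stochastic_general
    (n : ℕ) (T : ℝ)
    (G : ℝ → Matrix (Fin n) (Fin n) ℝ)
    (hGcont : ∀ i j, ContinuousOn (fun t => G t i j) (Icc 0 T))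
    (hGoffdiag : ∀ t ∈ Icc (0 : ℝ) T, ∀ i j, i ≠ j → 0 ≤ G t i j)
    (hGrow : ∀ t ∈ Icc (0 : ℝ) T, ∀ i, ∑ j, G t i j = 0)
    (Y : ℝ → Matrix (Fin n) (Fin n) ℝ)
    (hY : ∀ t ∈ Icc (0 : ℝ) T, ∀ i j,
      HasDerivWithinAt (fun s => Y s i j) ((Y t * G t) i j) (Icc 0 T) t)
    (hY0 : Y 0 = 1) :
    ∀ t ∈ Icc (0 : ℝ) T, (∀ i j, 0 ≤ Y t i j) ∧ (∀ i, ∑ j, Y t i j = 1) := by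
  intro t ht
  have hrow : ∀ i, ∀ s ∈ Icc (0 : ℝ) T, ∀ j,
      HasDerivWithinAt (fun r => Y r i j) ((Y s i ᵥ* G s) j) (Icc 0 T) s :=
    fun i s hs j => hY s hs i j
  refine ⟨fun i => nonneg_of_hasDerivWithinAt_vecMul hGcont hGoffdiag (hrow i) ?_ t ht,
    fun i => ?_⟩
  · intro j
    rw [hY0, one_apply]
    split_ifs <;> norm_num
  · rw [sum_eq_of_hasDerivWithinAt_vecMul hGrow (hrow i) t ht, hY0]
    simp [one_apply]

theorem transition_matrix_stochastic
    (n : ℕ) (T : ℝ) (hT : 0 ≤ T)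
    (G : ℝ → Matrix (Fin n) (Fin n) ℝ)
    (hGcont : ∀ i j, ContinuousOn (fun t => G t i j) (Icc 0 T))
    (hGoffdiag : ∀ t ∈ Icc (0 : ℝ) T, ∀ i j, i ≠ j → 0 ≤ G t i j)
    (hGrow : ∀ t ∈ Icc (0 : ℝ) T, ∀ i, ∑ j, G t i j = 0)
    (Y : ℝ → Matrix (Fin n) (Fin n) ℝ)
    (hY : ∀ t ∈ Icc (0 : ℝ) T, ∀ i j,
      HasDerivWithinAt (fun s => Y s i j) ((Y t * G t) i j) (Icc 0 T) t)
    (hY0 : Y 0 = 1) :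
    ∀ t ∈ Icc (0 : ℝ) T, (∀ i j, 0 ≤ Y t i j) ∧ (∀ i, ∑ j, Y t i j = 1) :=
  transition_matrix_stochastic_general n T G hGcont hGoffdiag hGrow Y hY hY0
end
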